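/- arXiv:1002.2501 — 3 statements merged into one kernel-verified Lean document; each statement's English description precedes it below -/
import Mathlib

section
/- Let N = 2, x₀ ∈ ℝ², R₀ > 0 and G ≥ 0. Then there exist r₀ > max(R₀, 1) and α > 0, depending only on R₀ and G, with the following property: for every r ≥ r₀, if u is continuous on the closed annulus {x ∈ ℝ² : R₀ ≤ ‖x − x₀‖ ≤ r}, harmonic on the open annulus {x : R₀ < ‖x − x₀‖ < r}, satisfies u ≥ 0 on the closed annulus, u ≤ G on the inner circle {x : ‖x − x₀‖ = R₀}, and u = 0 on the outer circle {x : ‖x − x₀‖ = r}, then at every point x with ‖x − x₀‖ = r at which u is differentiable along the closed annulus, every such derivative p ∈ ℝ² satisfies ‖p‖² ≤ α / (r² (log r)²). -/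
/-!
By the weak maximum principle, `u` lies below the harmonic barrier
`b y = C (log r - log ‖y - x₀‖)`, `C = G / log (r / R₀)`, which equals `G` on the inner circle
and `0` on the outer one. At a point `x` of the outer circle, `0 ≤ u ≤ b` and `u x = b x = 0`,
so the derivative of `u` in every inward direction lies between `0` and that of `b`. The lower
bound forces `∇u (x)` to point along the inward normal, and the upper bound gives
`‖∇u (x)‖ ≤ C / r`; finally `C ≤ 2 G / log r` once `r ≥ R₀²`.
-/

open Metric Set

/-- The Laplacian of `f : ℝ^N → ℝ` at `x`, as the sum of the second partial
derivatives along the coordinate directions. -/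
noncomputable def lapl {N : ℕ} (f : EuclideanSpace ℝ (Fin N) → ℝ)
    (x : EuclideanSpace ℝ (Fin N)) : ℝ :=
  ∑ i : Fin N,
    fderiv ℝ (fun y => fderiv ℝ f y (EuclideanSpace.single i 1)) x (EuclideanSpace.single i 1)

/-- `f` is harmonic on `Ω`: it is `C²` there and its Laplacian vanishes on `Ω`. -/
def IsHarmonicOn {N : ℕ} (f : EuclideanSpace ℝ (Fin N) → ℝ)
    (Ω : Set (EuclideanSpace ℝ (Fin N))) : Prop :=
  ContDiffOn ℝ 2 f Ω ∧ ∀ x ∈ Ω, lapl f x = 0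

open Filter Topology InnerProductSpace RealInnerProductSpace Laplacian

theorem IsLocalMax.deriv_deriv_nonpos {g : ℝ → ℝ} {t : ℝ} (h : IsLocalMax g t)
    (hc : ContinuousAt g t) : deriv (deriv g) t ≤ 0 := by
  by_contra! hpos
  -- `t` would also be a local minimum, so `g` would be locally constant
  have hmin := isLocalMin_of_deriv_deriv_pos hpos h.deriv_eq_zero hc
  have hconst : g =ᶠ[𝓝 t] fun _ => g t := by
    filter_upwards [h, hmin] with s hmax hmin using le_antisymm hmax hmin
  rw [hconst.deriv.deriv_eq] at hpos
  simp at hpos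

section NormedSpace

variable {E : Type*} [NormedAddCommGroup E] [NormedSpace ℝ E]

theorem IsLocalMax.iteratedFDeriv_two_nonpos {f : E → ℝ} {x : E} (h : IsLocalMax f x)
    (hf : ContDiffAt ℝ 2 f x) (v : E) : iteratedFDeriv ℝ 2 f x ![v, v] ≤ 0 := by
  have hline : ∀ t : ℝ, HasDerivAt (fun s : ℝ => x + s • v) v t := fun t => by
    simpa using ((hasDerivAt_id t).smul_const v).const_add x
  have hdiff : ∀ᶠ y in 𝓝 x, DifferentiableAt ℝ f y :=
    (hf.eventually (by simp)).mono fun y hy => hy.differentiableAt two_ne_zero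
  have hfirst :
      deriv (fun s : ℝ => f (x + s • v)) =ᶠ[𝓝 0] fun s => fderiv ℝ f (x + s • v) v := by
    have hcont : Tendsto (fun s : ℝ => x + s • v) (𝓝 0) (𝓝 x) := by
      simpa using ((hline 0).continuousAt).tendsto
    filter_upwards [hcont.eventually hdiff] with s hs
    exact (hs.hasFDerivAt.comp_hasDerivAt s (hline s)).deriv
  have hD : DifferentiableAt ℝ (fderiv ℝ f) x :=
    (hf.fderiv_right (m := 1) (by norm_num)).differentiableAt one_ne_zero
  have hsecond :
      deriv (deriv fun s : ℝ => f (x + s • v)) 0 = fderiv ℝ (fderiv ℝ f) x v v := by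
    rw [hfirst.deriv_eq]
    have := (hD.hasFDerivAt.clm_apply (hasFDerivAt_const v x)).comp_hasDerivAt_of_eq (0 : ℝ)
      (hline 0) (by simp)
    simpa [Function.comp_def] using this.deriv
  have hmax : IsLocalMax (fun s : ℝ => f (x + s • v)) 0 := by
    refine IsLocalMax.comp_continuous ?_ (hline 0).continuousAt
    simpa using h
  have := hmax.deriv_deriv_nonpos
    (ContinuousAt.comp_of_eq hf.continuousAt (hline 0).continuousAt (by simp))
  simpa [hsecond, iteratedFDeriv_two_apply] using this

theorem HasFDerivWithinAt.apply_le_apply_of_le {f g : E → ℝ} {f' g' : StrongDual ℝ E}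
    {s : Set E} {x v : E}
    (hf : HasFDerivWithinAt f f' s x) (hg : HasFDerivWithinAt g g' s x)
    (hle : ∀ y ∈ s, f y ≤ g y) (hx : f x = g x) (hv : v ∈ posTangentConeAt s x) :
    f' v ≤ g' v := by
  have hmin : IsLocalMinOn (g - f) s x :=
    IsMinOn.localize fun y hy => by simpa [hx] using hle y hy
  simpa using hmin.hasFDerivWithinAt_nonneg (hg.sub hf) hv

end NormedSpace

section Annulus

variable {E : Type*} [SeminormedAddCommGroup E]

def closedAnnulus (a : E) (R r : ℝ) : Set E := {y | R ≤ ‖y - a‖ ∧ ‖y - a‖ ≤ r}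

def annulus (a : E) (R r : ℝ) : Set E := {y | R < ‖y - a‖ ∧ ‖y - a‖ < r}

theorem isOpen_annulus (a : E) (R r : ℝ) : IsOpen (annulus a R r) :=
  isOpen_Ioo.preimage (continuous_id.sub continuous_const).norm

theorem annulus_subset_closedAnnulus (a : E) (R r : ℝ) : annulus a R r ⊆ closedAnnulus a R r :=
  fun _ hy => ⟨hy.1.le, hy.2.le⟩

theorem isCompact_closedAnnulus [ProperSpace E] (a : E) (R r : ℝ) :
    IsCompact (closedAnnulus a R r) :=
  (isCompact_closedBall a r).of_isClosed_subset
    (isClosed_Icc.preimage (continuous_id.sub continuous_const).norm)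
    fun _ hy => by simpa [dist_eq_norm] using hy.2

theorem ne_of_mem_closedAnnulus {a y : E} {R r : ℝ} (hR : 0 < R)
    (hy : y ∈ closedAnnulus a R r) : y ≠ a := by
  rintro rfl
  simpa [hR.not_ge] using hy.1

end Annulus

section InnerProductSpace

variable {E : Type*} [NormedAddCommGroup E] [InnerProductSpace ℝ E]

theorem mem_posTangentConeAt_closedAnnulus {a x v : E} {R : ℝ} (hR : R < ‖x - a‖)
    (hv : ⟪x - a, v⟫ < 0) : v ∈ posTangentConeAt (closedAnnulus a R ‖x - a‖) x := by
  refine mem_posTangentConeAt_of_frequently_mem (Eventually.frequently ?_)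
  have hnorm : Tendsto (fun t : ℝ => ‖x + t • v - a‖) (𝓝[>] 0) (𝓝 ‖x - a‖) := by
    have hc : Continuous fun t : ℝ => ‖x + t • v - a‖ := by fun_prop
    simpa using (hc.tendsto 0).mono_left nhdsWithin_le_nhds
  have hslope : Tendsto (fun t : ℝ => 2 * ⟪x - a, v⟫ + t * ‖v‖ ^ 2) (𝓝[>] 0)
      (𝓝 (2 * ⟪x - a, v⟫)) := by
    have hc : Continuous fun t : ℝ => 2 * ⟪x - a, v⟫ + t * ‖v‖ ^ 2 := by fun_prop
    have := hc.tendsto 0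
    rw [zero_mul, add_zero] at this
    exact this.mono_left nhdsWithin_le_nhds
  have hslope_neg : 2 * ⟪x - a, v⟫ < 0 := by linarith
  filter_upwards [hnorm.eventually (lt_mem_nhds hR), hslope.eventually (gt_mem_nhds hslope_neg),
    self_mem_nhdsWithin] with t hinner hneg (ht : 0 < t)
  refine ⟨hinner.le, ?_⟩
  have hsq : ‖x + t • v - a‖ ^ 2 = ‖x - a‖ ^ 2 + t * (2 * ⟪x - a, v⟫ + t * ‖v‖ ^ 2) := by
    rw [show x + t • v - a = (x - a) + t • v by abel, norm_add_sq_real, real_inner_smul_right,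
      norm_smul, Real.norm_eq_abs, mul_pow, sq_abs]
    ring
  nlinarith [norm_nonneg (x + t • v - a), norm_nonneg (x - a), mul_neg_of_pos_of_neg ht hneg]

theorem exists_nonpos_eq_smul_of_inner_nonneg {e p : E} (he : e ≠ 0)
    (h : ∀ v, ⟪e, v⟫ < 0 → 0 ≤ ⟪p, v⟫) : ∃ c : ℝ, c ≤ 0 ∧ p = c • e := by
  have he2 : 0 < ‖e‖ ^ 2 := by positivity
  set c := ⟪p, e⟫ / ‖e‖ ^ 2
  set τ := p - c • e
  have hτe : ⟪e, τ⟫ = 0 := by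
    simp only [τ, c, inner_sub_right, real_inner_smul_right, real_inner_self_eq_norm_sq,
      real_inner_comm e p]
    field_simp
    ring
  have hpτ : ⟪p, τ⟫ = ‖τ‖ ^ 2 := by
    rw [← real_inner_self_eq_norm_sq]
    nth_rewrite 1 [show p = τ + c • e by simp [τ]]
    rw [inner_add_left, real_inner_smul_left, real_inner_comm, hτe, mul_zero, add_zero]
  have hpe : ⟪p, e⟫ ≤ 0 := by
    have := h (-e) (by simpa [real_inner_self_eq_norm_sq] using he2)
    simpa using this
  -- testing `h` on `-τ - s • e` with `s → 0⁺` kills the component `τ` of `p` orthogonal to `e`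
  have hτ : ∀ s > 0, ‖τ‖ ^ 2 ≤ s * -⟪p, e⟫ := by
    intro s hs
    have := h (-τ - s • e) (by
      rw [inner_sub_right, inner_neg_right, hτe, real_inner_smul_right,
        real_inner_self_eq_norm_sq]
      nlinarith)
    rw [inner_sub_right, inner_neg_right, hpτ, real_inner_smul_right] at this
    linarith
  have hlim : Tendsto (fun s : ℝ => s * -⟪p, e⟫) (𝓝[>] 0) (𝓝 0) := by
    refine Tendsto.mono_left ?_ nhdsWithin_le_nhds
    simpa using (continuous_mul_const (-⟪p, e⟫)).tendsto (0 : ℝ)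
  have hτ0 : τ = 0 := by
    have : ‖τ‖ ^ 2 ≤ 0 := ge_of_tendsto hlim (eventually_mem_nhdsWithin.mono hτ)
    simpa using this
  exact ⟨c, div_nonpos_of_nonpos_of_nonneg hpe he2.le, by simpa [τ, sub_eq_zero] using hτ0⟩

theorem hasFDerivAt_log_norm_sub {a x : E} (hx : x ≠ a) :
    HasFDerivAt (fun y => Real.log ‖y - a‖) ((‖x - a‖ ^ 2)⁻¹ • innerSL ℝ (x - a)) x := by
  have hsq := ((hasFDerivAt_id x).sub_const a).norm_sq.log
    (by simpa [sub_eq_zero] using hx)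
  have hhalf :
      (fun y => Real.log ‖y - a‖) = fun y => 2⁻¹ * Real.log (‖id y - a‖ ^ 2) := by
    funext y
    rw [id, Real.log_pow]
    push_cast
    ring
  rw [hhalf]
  refine (hsq.const_mul 2⁻¹).congr_fderiv ?_
  ext v
  simp
  ring

end InnerProductSpace

section FiniteDimensional

variable {E F : Type*} [NormedAddCommGroup E] [InnerProductSpace ℝ E] [FiniteDimensional ℝ E]
  [NormedAddCommGroup F] [InnerProductSpace ℝ F] [FiniteDimensional ℝ F]

theorem IsLocalMax.laplacian_nonpos {f : E → ℝ} {x : E} (h : IsLocalMax f x)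
    (hf : ContDiffAt ℝ 2 f x) : Δ f x ≤ 0 := by
  rw [laplacian_eq_iteratedFDeriv_stdOrthonormalBasis]
  exact Finset.sum_nonpos fun i _ => h.iteratedFDeriv_two_nonpos hf _

theorem laplacian_norm_sq (x : E) : Δ (fun y : E => ‖y‖ ^ 2) x = 2 * Module.finrank ℝ E := by
  have hsecond :
      fderiv ℝ (fderiv ℝ fun y : E => ‖y‖ ^ 2) x = (2 : ℕ) • innerSL ℝ (E := E) := by
    rw [fderiv_norm_sq]
    exact ((innerSL ℝ (E := E)).hasFDerivAt.const_smul (2 : ℕ)).fderiv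
  have hunit : ∀ i, innerSL ℝ (stdOrthonormalBasis ℝ E i) (stdOrthonormalBasis ℝ E i) = 1 :=
    fun i => by
      rw [innerSL_apply_apply, real_inner_self_eq_norm_sq,
        (stdOrthonormalBasis ℝ E).orthonormal.1 i, one_pow]
  rw [laplacian_eq_iteratedFDeriv_stdOrthonormalBasis]
  simp [iteratedFDeriv_two_apply, hsecond, hunit, mul_comm]

theorem IsCompact.exists_isMaxOn_diff_of_laplacian_pos {f : E → ℝ} {K A : Set E}
    (hK : IsCompact K) (hne : K.Nonempty) (hA : IsOpen A) (hAK : A ⊆ K)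
    (hcont : ContinuousOn f K) (hf : ∀ x ∈ A, ContDiffAt ℝ 2 f x)
    (hΔ : ∀ x ∈ A, 0 < Δ f x) : ∃ z ∈ K \ A, IsMaxOn f K z := by
  obtain ⟨z, hzK, hzmax⟩ := hK.exists_isMaxOn hne hcont
  refine ⟨z, ⟨hzK, fun hzA => ?_⟩, hzmax⟩
  have hloc : IsLocalMax f z := (hzmax.on_subset hAK).isLocalMax (hA.mem_nhds hzA)
  exact (hloc.laplacian_nonpos (hf z hzA)).not_gt (hΔ z hzA)

theorem le_of_laplacian_nonneg [Nontrivial E] {f : E → ℝ} {K A : Set E}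
    (hK : IsCompact K) (hA : IsOpen A) (hAK : A ⊆ K)
    (hcont : ContinuousOn f K) (hf : ∀ x ∈ A, ContDiffAt ℝ 2 f x)
    (hΔ : ∀ x ∈ A, 0 ≤ Δ f x) (hbd : ∀ x ∈ K \ A, f x ≤ 0) {x : E} (hx : x ∈ K) :
    f x ≤ 0 := by
  obtain ⟨M, hM⟩ := hK.isBounded.exists_norm_le
  have hdim : (0 : ℝ) < Module.finrank ℝ E := by exact_mod_cast Module.finrank_pos
  -- `f + ε ‖·‖²` has positive Laplacian, so it attains its maximum over `K` outside `A`
  have hperturbed : ∀ ε > 0, f x ≤ ε * M ^ 2 := by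
    intro ε hε
    have hsq : ContDiff ℝ 2 fun y : E => ‖y‖ ^ 2 := contDiff_norm_sq ℝ
    have hεsq : ContDiff ℝ 2 (ε • fun y : E => ‖y‖ ^ 2) := hsq.const_smul ε
    set g : E → ℝ := f + ε • fun y => ‖y‖ ^ 2
    obtain ⟨z, ⟨hzK, hzA⟩, hzmax⟩ := hK.exists_isMaxOn_diff_of_laplacian_pos ⟨x, hx⟩ hA hAK
      (hcont.add hεsq.continuous.continuousOn) (fun y hy => (hf y hy).add hεsq.contDiffAt)
      fun y hy => by
        rw [(hf y hy).laplacian_add hεsq.contDiffAt,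
          laplacian_smul ε hsq.contDiffAt, laplacian_norm_sq]
        have hΔy := hΔ y hy
        simp only [smul_eq_mul]
        positivity
    calc f x ≤ g x := le_add_of_nonneg_right (by simp only [Pi.smul_apply]; positivity)
      _ ≤ g z := hzmax hx
      _ ≤ ε * M ^ 2 := by
        have hfz := hbd z ⟨hzK, hzA⟩
        have hz : ‖z‖ ^ 2 ≤ M ^ 2 := pow_le_pow_left₀ (norm_nonneg z) (hM z hzK) 2
        simp only [g, Pi.add_apply, Pi.smul_apply, smul_eq_mul]
        nlinarith
  by_contra! hpos
  have hsmall := hperturbed (f x / (2 * (M ^ 2 + 1))) (by positivity)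
  rw [div_mul_eq_mul_div, le_div_iff₀ (by positivity)] at hsmall
  nlinarith [sq_nonneg M]

theorem le_on_closedAnnulus_of_harmonicOnNhd [Nontrivial E] {u v : E → ℝ} {a : E} {R r : ℝ}
    (hu : ContinuousOn u (closedAnnulus a R r)) (hv : ContinuousOn v (closedAnnulus a R r))
    (huh : HarmonicOnNhd u (annulus a R r)) (hvh : HarmonicOnNhd v (annulus a R r))
    (hbd : ∀ y, ‖y - a‖ = R ∨ ‖y - a‖ = r → u y ≤ v y) {y : E}
    (hy : y ∈ closedAnnulus a R r) : u y ≤ v y := by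
  have hdiff := huh.sub hvh
  refine sub_nonpos.mp (le_of_laplacian_nonneg (isCompact_closedAnnulus a R r)
    (isOpen_annulus a R r) (annulus_subset_closedAnnulus a R r) (hu.sub hv)
    (fun z hz => (hdiff z hz).1) (fun z hz => (hdiff z hz).2.self_of_nhds.ge) ?_ hy)
  rintro z ⟨⟨hRz, hzr⟩, hz⟩
  refine sub_nonpos.mpr (hbd z ?_)
  by_contra! hne
  exact hz ⟨hRz.lt_of_ne' hne.1, hzr.lt_of_ne hne.2⟩

theorem laplacian_comp_linearIsometryEquiv (L : E ≃ₗᵢ[ℝ] F) (f : F → ℝ) (x : E) :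
    Δ (f ∘ L) x = Δ f (L x) := by
  set b := stdOrthonormalBasis ℝ E
  rw [laplacian_eq_iteratedFDeriv_orthonormalBasis (f ∘ L) b,
    laplacian_eq_iteratedFDeriv_orthonormalBasis f (b.map L)]
  refine Finset.sum_congr rfl fun i _ => ?_
  have := L.toContinuousLinearEquiv.iteratedFDerivWithin_comp_right f uniqueDiffOn_univ
    (mem_univ (L x)) 2
  simp only [preimage_univ, iteratedFDerivWithin_univ] at this
  change iteratedFDeriv ℝ 2 (f ∘ L.toContinuousLinearEquiv) x _ = _
  rw [this]
  simp only [ContinuousMultilinearMap.compContinuousLinearMap_apply, OrthonormalBasis.map_apply]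
  congr 1
  funext j
  fin_cases j <;> rfl

theorem InnerProductSpace.HarmonicAt.comp_linearIsometryEquiv {f : F → ℝ} {x : E}
    (L : E ≃ₗᵢ[ℝ] F) (hf : HarmonicAt f (L x)) : HarmonicAt (f ∘ L) x := by
  refine ⟨hf.1.comp x L.contDiff.contDiffAt, ?_⟩
  have hL : Tendsto L (𝓝 x) (𝓝 (L x)) := L.continuous.tendsto x
  filter_upwards [hL.eventually hf.2] with y hy
  rw [laplacian_comp_linearIsometryEquiv]
  exact hy

theorem harmonicAt_log_norm_sub (hE : Module.finrank ℝ E = 2) {a x : E} (hx : x ≠ a) :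
    HarmonicAt (fun y => Real.log ‖y - a‖) x := by
  set L : E ≃ₗᵢ[ℝ] ℂ := ((stdOrthonormalBasis ℝ E).reindex (finCongr hE)).repr.trans
    Complex.orthonormalBasisOneI.repr.symm
  have hℂ : HarmonicAt (fun w : ℂ => Real.log ‖w - L a‖) (L x) :=
    (analyticAt_id.sub analyticAt_const).harmonicAt_log_norm
      (sub_ne_zero.mpr (L.injective.ne hx))
  convert hℂ.comp_linearIsometryEquiv L using 2 with y
  simp [← map_sub]

theorem le_log_barrier_of_harmonicOnNhd (hE : Module.finrank ℝ E = 2) {u : E → ℝ} {a : E}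
    {R r G : ℝ} (hR : 0 < R) (hRr : R < r)
    (hcont : ContinuousOn u (closedAnnulus a R r)) (hharm : HarmonicOnNhd u (annulus a R r))
    (hin : ∀ y, ‖y - a‖ = R → u y ≤ G) (hout : ∀ y, ‖y - a‖ = r → u y = 0) {y : E}
    (hy : y ∈ closedAnnulus a R r) :
    u y ≤ G / Real.log (r / R) * (Real.log r - Real.log ‖y - a‖) := by
  have : Nontrivial E := Module.nontrivial_of_finrank_eq_succ hE
  have hbharm : HarmonicOnNhd (fun y => G / Real.log (r / R) * (Real.log r - Real.log ‖y - a‖))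
      (annulus a R r) := fun z hz =>
    ((harmonicAt_const _).sub (harmonicAt_log_norm_sub hE (ne_of_mem_closedAnnulus hR
      (annulus_subset_closedAnnulus a R r hz)))).const_smul (c := G / Real.log (r / R))
  have hbcont : ContinuousOn (fun y => G / Real.log (r / R) * (Real.log r - Real.log ‖y - a‖))
      (closedAnnulus a R r) :=
    continuousOn_const.mul (continuousOn_const.sub (ContinuousOn.log (by fun_prop)
      fun z hz => norm_ne_zero_iff.mpr (sub_ne_zero.mpr (ne_of_mem_closedAnnulus hR hz))))
  refine le_on_closedAnnulus_of_harmonicOnNhd hcont hbcont hharm hbharm (fun z hz => ?_) hy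
  rcases hz with hz | hz
  · have hlog : Real.log r - Real.log R = Real.log (r / R) :=
      (Real.log_div (hR.trans hRr).ne' hR.ne').symm
    have hpos : 0 < Real.log (r / R) := Real.log_pos ((one_lt_div hR).mpr hRr)
    simpa [hz, hlog, hpos.ne'] using hin z hz
  · simp [hz, hout z hz]

theorem norm_gradient_mul_radius_le_of_harmonicOnNhd (hE : Module.finrank ℝ E = 2)
    {u : E → ℝ} {a x p : E} {R r G : ℝ} (hR : 0 < R) (hRr : R < r)
    (hcont : ContinuousOn u (closedAnnulus a R r)) (hharm : HarmonicOnNhd u (annulus a R r))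
    (h0 : ∀ y ∈ closedAnnulus a R r, 0 ≤ u y) (hin : ∀ y, ‖y - a‖ = R → u y ≤ G)
    (hout : ∀ y, ‖y - a‖ = r → u y = 0) (hx : ‖x - a‖ = r)
    (hp : HasGradientWithinAt u p (closedAnnulus a R r) x) :
    ‖p‖ * r ≤ G / Real.log (r / R) := by
  set C := G / Real.log (r / R)
  have hr : 0 < r := hR.trans hRr
  have hxa : x ≠ a := ne_of_mem_closedAnnulus hR ⟨hx ▸ hRr.le, hx.le⟩
  have hcone : ∀ v, ⟪x - a, v⟫ < 0 → v ∈ posTangentConeAt (closedAnnulus a R r) x :=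
    fun v hv => hx ▸ mem_posTangentConeAt_closedAnnulus (hx ▸ hRr) hv
  have hux : u x = 0 := hout x hx
  obtain ⟨c, hc, rfl⟩ := exists_nonpos_eq_smul_of_inner_nonneg (sub_ne_zero.mpr hxa)
    fun v hv => by
      simpa using (hasFDerivWithinAt_const 0 _ _).apply_le_apply_of_le hp.hasFDerivWithinAt h0
        hux.symm (hcone v hv)
  have hb : HasFDerivAt (fun y => C * (Real.log r - Real.log ‖y - a‖))
      (C • -((‖x - a‖ ^ 2)⁻¹ • innerSL ℝ (x - a))) x :=
    ((hasFDerivAt_log_norm_sub hxa).const_sub _).const_mul C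
  have hupper := hp.hasFDerivWithinAt.apply_le_apply_of_le hb.hasFDerivWithinAt
    (fun y hy => le_log_barrier_of_harmonicOnNhd hE hR hRr hcont hharm hin hout hy)
    (by simp [hux, hx]) (hcone (-(x - a)) (by
      rw [inner_neg_right, real_inner_self_eq_norm_sq, hx]
      nlinarith))
  simp only [toDual_apply_apply, smul_apply, neg_apply, innerSL_apply_apply, inner_neg_right,
    real_inner_smul_left, real_inner_self_eq_norm_sq, hx, smul_eq_mul] at hupper
  field_simp at hupper
  rw [norm_smul, hx, Real.norm_of_nonpos hc]
  linarith

end FiniteDimensional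

theorem lapl_eq_laplacian {N : ℕ} {f : EuclideanSpace ℝ (Fin N) → ℝ}
    {x : EuclideanSpace ℝ (Fin N)} (hf : ContDiffAt ℝ 2 f x) : lapl f x = Δ f x := by
  have hD : DifferentiableAt ℝ (fderiv ℝ f) x :=
    (hf.fderiv_right (m := 1) (by norm_num)).differentiableAt one_ne_zero
  rw [laplacian_eq_iteratedFDeriv_orthonormalBasis f (EuclideanSpace.basisFun (Fin N) ℝ)]
  refine Finset.sum_congr rfl fun i _ => ?_
  rw [iteratedFDeriv_two_apply, fderiv_clm_apply hD (differentiableAt_const _)]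
  simp

theorem IsHarmonicOn.harmonicOnNhd {N : ℕ} {f : EuclideanSpace ℝ (Fin N) → ℝ}
    {Ω : Set (EuclideanSpace ℝ (Fin N))} (h : IsHarmonicOn f Ω) (hΩ : IsOpen Ω) :
    HarmonicOnNhd f Ω := fun x hx =>
  ⟨h.1.contDiffAt (hΩ.mem_nhds hx), by
    filter_upwards [hΩ.mem_nhds hx] with y hy
    rw [← lapl_eq_laplacian (h.1.contDiffAt (hΩ.mem_nhds hy))]
    exact h.2 y hy⟩

theorem stmt1_general (x₀ : EuclideanSpace ℝ (Fin 2))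
    (R₀ G : ℝ) (hR₀ : 0 < R₀) :
    ∃ r₀ > max R₀ 1, ∃ α > 0, ∀ r, r₀ ≤ r →
      ∀ u : EuclideanSpace ℝ (Fin 2) → ℝ,
        ContinuousOn u {x | R₀ ≤ ‖x - x₀‖ ∧ ‖x - x₀‖ ≤ r} →
        IsHarmonicOn u {x | R₀ < ‖x - x₀‖ ∧ ‖x - x₀‖ < r} →
        (∀ x, R₀ ≤ ‖x - x₀‖ → ‖x - x₀‖ ≤ r → 0 ≤ u x) →
        (∀ x, ‖x - x₀‖ = R₀ → u x ≤ G) →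
        (∀ x, ‖x - x₀‖ = r → u x = 0) →
        ∀ x, ‖x - x₀‖ = r →
          ∀ p : EuclideanSpace ℝ (Fin 2),
            HasGradientWithinAt u p {x | R₀ ≤ ‖x - x₀‖ ∧ ‖x - x₀‖ ≤ r} x →
            ‖p‖ ^ 2 ≤ α / (r ^ 2 * Real.log r ^ 2) := by
  refine ⟨R₀ ^ 2 + 2, by rw [gt_iff_lt, max_lt_iff]; constructor <;> nlinarith,
    4 * G ^ 2 + 1, by positivity, ?_⟩
  intro r hr u hcont hharm h0 hin hout x hx p hp
  have hRr : R₀ < r := by nlinarith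
  have hr : 0 < r := hR₀.trans hRr
  have hlogr : 0 < Real.log r := Real.log_pos (by nlinarith)
  have hkey := norm_gradient_mul_radius_le_of_harmonicOnNhd finrank_euclideanSpace_fin hR₀ hRr
    hcont (hharm.harmonicOnNhd (isOpen_annulus x₀ R₀ r)) (fun y hy => h0 y hy.1 hy.2) hin hout
    hx hp
  have hhalf : Real.log r / 2 ≤ Real.log (r / R₀) := by
    rw [Real.log_div hr.ne' hR₀.ne']
    have := Real.log_le_log (by positivity) (show R₀ ^ 2 ≤ r by nlinarith)
    rw [Real.log_pow] at this
    push_cast at this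
    linarith
  calc ‖p‖ ^ 2 = (‖p‖ * r) ^ 2 / r ^ 2 := by field_simp
    _ ≤ (G / Real.log (r / R₀)) ^ 2 / r ^ 2 := by gcongr
    _ ≤ (G / (Real.log r / 2)) ^ 2 / r ^ 2 := by rw [div_pow, div_pow]; gcongr
    _ = 4 * G ^ 2 / (r ^ 2 * Real.log r ^ 2) := by field_simp; ring
    _ ≤ (4 * G ^ 2 + 1) / (r ^ 2 * Real.log r ^ 2) := by gcongr; linarith

theorem stmt1 (x₀ : EuclideanSpace ℝ (Fin 2))
    (R₀ G : ℝ) (hR₀ : 0 < R₀) (hG : 0 ≤ G) :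
    ∃ r₀ > max R₀ 1, ∃ α > 0, ∀ r, r₀ ≤ r →
      ∀ u : EuclideanSpace ℝ (Fin 2) → ℝ,
        ContinuousOn u {x | R₀ ≤ ‖x - x₀‖ ∧ ‖x - x₀‖ ≤ r} →
        IsHarmonicOn u {x | R₀ < ‖x - x₀‖ ∧ ‖x - x₀‖ < r} →
        (∀ x, R₀ ≤ ‖x - x₀‖ → ‖x - x₀‖ ≤ r → 0 ≤ u x) →
        (∀ x, ‖x - x₀‖ = R₀ → u x ≤ G) →
        (∀ x, ‖x - x₀‖ = r → u x = 0) →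
        ∀ x, ‖x - x₀‖ = r →
          ∀ p : EuclideanSpace ℝ (Fin 2),
            HasGradientWithinAt u p {x | R₀ ≤ ‖x - x₀‖ ∧ ‖x - x₀‖ ≤ r} x →
            ‖p‖ ^ 2 ≤ α / (r ^ 2 * Real.log r ^ 2) :=
  stmt1_general x₀ R₀ G hR₀
end

section
/- Let N ≥ 2 and let S ⊂ ℝ^N be a nonempty compact set equal to the closure of its interior. Define the signed distance 𝐝_S(x) := dist(x, S) − dist(x, closure(ℝ^N ∖ S)), and suppose that for some γ₀ > 0 the function 𝐝_S is of class C² on the open set {x : |𝐝_S(x)| < 2γ₀}. Let m > 0. Then there exists α > 0, depending only on S, γ₀ and m, such that for every γ ∈ (0, γ₀) the following holds: if u is continuous on the compact set {x : 0 ≤ 𝐝_S(x) ≤ γ}, harmonic on the open set {x : 0 < 𝐝_S(x) < γ}, satisfies u ≥ 0 on {0 ≤ 𝐝_S ≤ γ}, u ≥ m on {x : 𝐝_S(x) = 0}, and u = 0 on {x : 𝐝_S(x) = γ}, then at every point x with 𝐝_S(x) = γ at which u is differentiable along {0 ≤ 𝐝_S ≤ γ}, every such derivative p ∈ ℝ^N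 satisfies ‖p‖² ≥ α/γ². -/
open Metric Set Filter Topology

/-- The signed distance to a set `S`: `dist(x, S) - dist(x, closure (Sᶜ))`. -/
noncomputable def sgnDist {N : ℕ} (S : Set (EuclideanSpace ℝ (Fin N)))
    (x : EuclideanSpace ℝ (Fin N)) : ℝ :=
  Metric.infDist x S - Metric.infDist x (closure Sᶜ)

/-!
Hopf-lemma argument. On the compact shell `{0 ≤ 𝐝_S ≤ γ₀}`, where `𝐝_S` is `C²`, the Laplacian
of `𝐝_S` is bounded by some `K > 0`. Off `S`, `𝐝_S` decreases at unit speed towards a nearest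
point of `S`, so its gradient has norm at least `1`. Hence for
`φ(t) = m (e^{-Kt} - e^{-Kγ}) / (1 - e^{-Kγ})` the function `φ ∘ 𝐝_S` is strictly subharmonic on
`{0 < 𝐝_S < γ}`, equals `m` on `{𝐝_S = 0}` and `0` on `{𝐝_S = γ}`, so the comparison principle
gives `φ ∘ 𝐝_S ≤ u`. Both vanish at `x`, so along the unit vector `v` pointing to the nearest
point of `S`, `⟪p, v⟫ ≥ -φ'(γ) = K m e^{-Kγ} / (1 - e^{-Kγ}) ≥ m e^{-Kγ₀} / γ`, and
`α = (m e^{-Kγ₀})²` works.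
-/

section SecondDerivative

variable {E : Type*} [NormedAddCommGroup E] [NormedSpace ℝ E] {f g : E → ℝ} {x : E}

theorem hasDerivAt_add_smul (x e : E) (t : ℝ) : HasDerivAt (fun t : ℝ => x + t • e) e t := by
  simpa using ((hasDerivAt_id t).smul_const e).const_add x

theorem ContDiffAt.differentiableAt_fderiv_apply (hf : ContDiffAt ℝ 2 f x) (e : E) :
    DifferentiableAt ℝ (fun y => fderiv ℝ f y e) x :=
  ((hf.fderiv_right (m := 1) (by norm_num)).differentiableAt one_ne_zero).clm_apply
    (differentiableAt_const e)

theorem ContDiffAt.eventually_differentiableAt (hf : ContDiffAt ℝ 2 f x) :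
    ∀ᶠ y in 𝓝 x, DifferentiableAt ℝ f y :=
  (hf.eventually (by simp)).mono fun _ hy => hy.differentiableAt two_ne_zero

/-- If the second derivative were negative, the local minimum would also be a local maximum,
making `φ` locally constant and its second derivative zero. -/
theorem IsLocalMin.nonneg_of_hasDerivAt_deriv {φ : ℝ → ℝ} {a c : ℝ} (hmin : IsLocalMin φ a)
    (hφ : ContinuousAt φ a) (hc : HasDerivAt (deriv φ) c a) : 0 ≤ c := by
  by_contra! hneg
  have hmax : IsLocalMax φ a :=
    isLocalMax_of_deriv_deriv_neg (hc.deriv ▸ hneg) hmin.deriv_eq_zero hφ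
  have hconst : φ =ᶠ[𝓝 a] fun _ => φ a :=
    (hmin.and hmax).mono fun _ h => le_antisymm h.2 h.1
  have hzero : HasDerivAt (fun _ => (0 : ℝ)) c a :=
    hc.congr_of_eventuallyEq (by simpa using hconst.deriv.symm)
  exact hneg.ne (hzero.unique (hasDerivAt_const a 0))

theorem IsLocalMin.fderiv_fderiv_apply_nonneg (hf : ContDiffAt ℝ 2 f x) (hmin : IsLocalMin f x)
    (e : E) : 0 ≤ fderiv ℝ (fun y => fderiv ℝ f y e) x e := by
  have hline := hasDerivAt_add_smul x e
  have hline0 : x = x + (0 : ℝ) • e := by simp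
  have hderiv : deriv (fun t : ℝ => f (x + t • e)) =ᶠ[𝓝 0] fun t => fderiv ℝ f (x + t • e) e := by
    have h : ∀ᶠ t in 𝓝 (0 : ℝ), DifferentiableAt ℝ f (x + t • e) :=
      (hline 0).continuousAt.tendsto.eventually (hline0 ▸ hf.eventually_differentiableAt)
    exact h.mono fun t ht => (ht.hasFDerivAt.comp_hasDerivAt t (hline t)).deriv
  refine IsLocalMin.nonneg_of_hasDerivAt_deriv (a := 0) ?_ ?_
    (HasDerivAt.congr_of_eventuallyEq ?_ hderiv)
  · have hmin' : IsLocalMin f ((fun t : ℝ => x + t • e) 0) := by simpa using hmin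
    exact hmin'.comp_continuous (g := fun t : ℝ => x + t • e) (hline 0).continuousAt
  · exact hf.continuousAt.comp_of_eq (hline 0).continuousAt hline0.symm
  · exact (hf.differentiableAt_fderiv_apply e).hasFDerivAt.comp_hasDerivAt_of_eq 0 (hline 0)
      hline0

theorem fderiv_fderiv_sub_apply (hf : ContDiffAt ℝ 2 f x) (hg : ContDiffAt ℝ 2 g x) (e : E) :
    fderiv ℝ (fun y => fderiv ℝ (fun z => f z - g z) y e) x e =
      fderiv ℝ (fun y => fderiv ℝ f y e) x e - fderiv ℝ (fun y => fderiv ℝ g y e) x e := by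
  have hev : (fun y => fderiv ℝ (fun z => f z - g z) y e) =ᶠ[𝓝 x]
      fun y => fderiv ℝ f y e - fderiv ℝ g y e := by
    filter_upwards [hf.eventually_differentiableAt, hg.eventually_differentiableAt] with y hfy hgy
    simp [fderiv_fun_sub hfy hgy]
  rw [hev.fderiv_eq, fderiv_fun_sub (hf.differentiableAt_fderiv_apply e)
    (hg.differentiableAt_fderiv_apply e)]
  rfl

theorem fderiv_fderiv_comp_apply {φ φ' : ℝ → ℝ} {φ'' : ℝ} (hf : ContDiffAt ℝ 2 f x)
    (hφ : ∀ᶠ t in 𝓝 (f x), HasDerivAt φ (φ' t) t) (hφ' : HasDerivAt φ' φ'' (f x)) (e : E) :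
    fderiv ℝ (fun y => fderiv ℝ (fun z => φ (f z)) y e) x e =
      φ'' * fderiv ℝ f x e ^ 2 + φ' (f x) * fderiv ℝ (fun y => fderiv ℝ f y e) x e := by
  have hev : (fun y => fderiv ℝ (fun z => φ (f z)) y e) =ᶠ[𝓝 x]
      fun y => φ' (f y) * fderiv ℝ f y e := by
    filter_upwards [hf.continuousAt.tendsto.eventually hφ, hf.eventually_differentiableAt]
      with y hφy hfy
    have h := (hφy.comp_hasFDerivAt y hfy.hasFDerivAt).fderiv
    simp only [Function.comp_def] at h
    simp [h]
  have hφ'f : HasFDerivAt (fun y => φ' (f y)) (φ'' • fderiv ℝ f x) x :=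
    hφ'.comp_hasFDerivAt x (hf.differentiableAt two_ne_zero).hasFDerivAt
  rw [hev.fderiv_eq, (hφ'f.fun_mul (hf.differentiableAt_fderiv_apply e).hasFDerivAt).fderiv]
  simp only [_root_.add_apply, _root_.smul_apply, smul_eq_mul]
  ring

end SecondDerivative

section Laplacian

variable {N : ℕ} {f u w : EuclideanSpace ℝ (Fin N) → ℝ} {x : EuclideanSpace ℝ (Fin N)}

theorem IsLocalMin.lapl_nonneg (hf : ContDiffAt ℝ 2 f x) (hmin : IsLocalMin f x) :
    0 ≤ lapl f x :=
  Finset.sum_nonneg fun _ _ => hmin.fderiv_fderiv_apply_nonneg hf _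

theorem ContDiffAt.lapl_sub (hu : ContDiffAt ℝ 2 u x) (hw : ContDiffAt ℝ 2 w x) :
    lapl (fun y => u y - w y) x = lapl u x - lapl w x := by
  simp only [lapl, fderiv_fderiv_sub_apply hu hw, Finset.sum_sub_distrib]

theorem ContDiffAt.lapl_comp {φ φ' : ℝ → ℝ} {φ'' : ℝ} (hf : ContDiffAt ℝ 2 f x)
    (hφ : ∀ᶠ t in 𝓝 (f x), HasDerivAt φ (φ' t) t) (hφ' : HasDerivAt φ' φ'' (f x)) :
    lapl (fun y => φ (f y)) x =
      φ'' * ∑ i, fderiv ℝ f x (EuclideanSpace.single i 1) ^ 2 + φ' (f x) * lapl f x := by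
  simp only [lapl, fderiv_fderiv_comp_apply hf hφ hφ', Finset.sum_add_distrib, Finset.mul_sum]

theorem ContDiffOn.continuousOn_lapl {U : Set (EuclideanSpace ℝ (Fin N))} (hU : IsOpen U)
    (hf : ContDiffOn ℝ 2 f U) : ContinuousOn (lapl f) U := by
  refine continuousOn_finsetSum _ fun i _ => ?_
  have hfi : ContDiffOn ℝ 1 (fun y => fderiv ℝ f y (EuclideanSpace.single i 1)) U :=
    (hf.fderiv_of_isOpen hU (by norm_num)).clm_apply contDiffOn_const
  exact (hfi.continuousOn_fderiv_of_isOpen hU le_rfl).clm_apply continuousOn_const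

theorem IsCompact.exists_lapl_lt {A U : Set (EuclideanSpace ℝ (Fin N))} (hA : IsCompact A)
    (hU : IsOpen U) (hAU : A ⊆ U) (hf : ContDiffOn ℝ 2 f U) :
    ∃ K > 0, ∀ y ∈ A, lapl f y < K := by
  obtain ⟨B, hB⟩ := hA.bddAbove_image ((hf.continuousOn_lapl hU).mono hAU)
  exact ⟨max B 0 + 1, by positivity, fun y hy =>
    (hB (mem_image_of_mem _ hy)).trans_lt (by linarith [le_max_left B 0])⟩

/-- At an interior minimum of `u - w` the Laplacian of `u - w` would be both `≥ 0` and `< 0`. -/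
theorem le_of_isHarmonicOn_of_lapl_pos {K Ω : Set (EuclideanSpace ℝ (Fin N))} (hK : IsCompact K)
    (hΩ : IsOpen Ω) (hΩK : Ω ⊆ K) (hu : ContinuousOn u K) (hw : ContinuousOn w K)
    (huΩ : IsHarmonicOn u Ω) (hwΩ : ContDiffOn ℝ 2 w Ω) (hlapl : ∀ y ∈ Ω, 0 < lapl w y)
    (hbdry : ∀ y ∈ K \ Ω, w y ≤ u y) : ∀ y ∈ K, w y ≤ u y := by
  intro y hy
  obtain ⟨x₀, hx₀K, hmin⟩ := hK.exists_isMinOn ⟨y, hy⟩ (hu.sub hw)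
  by_cases hx₀Ω : x₀ ∈ Ω
  · have hloc : IsLocalMin (fun y => u y - w y) x₀ :=
      hmin.isLocalMin (mem_of_superset (hΩ.mem_nhds hx₀Ω) hΩK)
    have hu₀ := huΩ.1.contDiffAt (hΩ.mem_nhds hx₀Ω)
    have hw₀ := hwΩ.contDiffAt (hΩ.mem_nhds hx₀Ω)
    have h := hloc.lapl_nonneg (hu₀.sub hw₀)
    rw [hu₀.lapl_sub hw₀, huΩ.2 x₀ hx₀Ω] at h
    linarith [hlapl x₀ hx₀Ω]
  · have h₀ := hbdry x₀ ⟨hx₀K, hx₀Ω⟩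
    have hy₀ : u x₀ - w x₀ ≤ u y - w y := hmin hy
    linarith

end Laplacian

section Barrier

open Real

variable {K γ m : ℝ}

noncomputable def expBarrier (K γ m t : ℝ) : ℝ :=
  m * (exp (-(K * t)) - exp (-(K * γ))) / (1 - exp (-(K * γ)))

theorem one_sub_exp_neg_pos {y : ℝ} (hy : 0 < y) : 0 < 1 - exp (-y) := by
  linarith [exp_lt_one_iff.2 (neg_lt_zero.2 hy)]

theorem expBarrier_zero (h : 0 < K * γ) : expBarrier K γ m 0 = m := by
  have := one_sub_exp_neg_pos h
  simp only [expBarrier, mul_zero, neg_zero, exp_zero]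
  field_simp

theorem expBarrier_self : expBarrier K γ m γ = 0 := by
  simp [expBarrier]

theorem contDiff_expBarrier : ContDiff ℝ 2 (expBarrier K γ m) := by
  unfold expBarrier
  fun_prop

theorem hasDerivAt_neg_mul (K t : ℝ) : HasDerivAt (fun t => -(K * t)) (-K) t := by
  simpa using ((hasDerivAt_id' t).const_mul K).fun_neg

theorem hasDerivAt_expBarrier (t : ℝ) :
    HasDerivAt (expBarrier K γ m) (-(K * m * exp (-(K * t)) / (1 - exp (-(K * γ))))) t :=
  (((hasDerivAt_neg_mul K t).exp.sub_const _).const_mul m).div_const _ |>.congr_deriv (by ring)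

theorem hasDerivAt_deriv_expBarrier (t : ℝ) :
    HasDerivAt (fun t => -(K * m * exp (-(K * t)) / (1 - exp (-(K * γ)))))
      (K ^ 2 * m * exp (-(K * t)) / (1 - exp (-(K * γ)))) t :=
  (((hasDerivAt_neg_mul K t).exp.const_mul (K * m)).div_const _).fun_neg.congr_deriv (by ring)

theorem lapl_expBarrier_comp_pos {N : ℕ} {f : EuclideanSpace ℝ (Fin N) → ℝ}
    {x : EuclideanSpace ℝ (Fin N)} (hK : 0 < K) (hγ : 0 < γ) (hm : 0 < m)
    (hf : ContDiffAt ℝ 2 f x) (hgrad : 1 ≤ ∑ i, fderiv ℝ f x (EuclideanSpace.single i 1) ^ 2)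
    (hlapl : lapl f x < K) : 0 < lapl (fun y => expBarrier K γ m (f y)) x := by
  rw [hf.lapl_comp (Eventually.of_forall hasDerivAt_expBarrier) (hasDerivAt_deriv_expBarrier _)]
  have hD := one_sub_exp_neg_pos (mul_pos hK hγ)
  have hc : 0 < K * m * exp (-(K * f x)) / (1 - exp (-(K * γ))) := by positivity
  have key : K ^ 2 * m * exp (-(K * f x)) / (1 - exp (-(K * γ))) *
        ∑ i, fderiv ℝ f x (EuclideanSpace.single i 1) ^ 2 +
      -(K * m * exp (-(K * f x)) / (1 - exp (-(K * γ)))) * lapl f x =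
      K * m * exp (-(K * f x)) / (1 - exp (-(K * γ))) *
        (K * ∑ i, fderiv ℝ f x (EuclideanSpace.single i 1) ^ 2 - lapl f x) := by
    ring
  rw [key]
  exact mul_pos hc (by nlinarith)

theorem div_le_neg_deriv_expBarrier {γ₀ : ℝ} (hK : 0 < K) (hγ : 0 < γ) (hγγ₀ : γ ≤ γ₀)
    (hm : 0 ≤ m) :
    m * exp (-(K * γ₀)) / γ ≤ K * m * exp (-(K * γ)) / (1 - exp (-(K * γ))) := by
  have hD := one_sub_exp_neg_pos (mul_pos hK hγ)
  have hDle : 1 - exp (-(K * γ)) ≤ K * γ := by linarith [add_one_le_exp (-(K * γ))]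
  calc m * exp (-(K * γ₀)) / γ ≤ m * exp (-(K * γ)) / γ := by gcongr
    _ = K * m * exp (-(K * γ)) / (K * γ) := by field_simp
    _ ≤ K * m * exp (-(K * γ)) / (1 - exp (-(K * γ))) := by gcongr

end Barrier

section Geometry

variable {E : Type*} [NormedAddCommGroup E] [NormedSpace ℝ E]

theorem infDist_add_smul_eq {S : Set E} {x v : E} {t s : ℝ} (hv : ‖v‖ = 1)
    (hx : infDist x S = t) (hS : x + t • v ∈ S) (hs : s ∈ Icc 0 t) :
    infDist (x + s • v) S = t - s := by
  have hdist : ∀ r : ℝ, ‖r • v‖ = |r| := fun r => by rw [norm_smul, hv, mul_one, Real.norm_eq_abs]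
  apply le_antisymm
  · calc infDist (x + s • v) S ≤ dist (x + s • v) (x + t • v) := infDist_le_dist_of_mem hS
      _ = t - s := by
        rw [dist_add_left, dist_eq_norm, ← sub_smul, hdist, abs_of_nonpos (by linarith [hs.2])]
        ring
  · have h := infDist_le_infDist_add_dist (s := S) (x := x) (y := x + s • v)
    rw [hx, dist_self_add_right, hdist, abs_of_nonneg hs.1] at h
    linarith

theorem HasFDerivAt.apply_eq_of_add_smul {f : E → ℝ} {f' : E →L[ℝ] ℝ} {x v : E} {t c : ℝ}
    (hf : HasFDerivAt f f' x) (ht : 0 < t)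
    (hline : ∀ s ∈ Ico 0 t, f (x + s • v) = f x + c * s) : f' v = c := by
  have hcomp : HasDerivWithinAt (fun s : ℝ => f (x + s • v)) (f' v) (Ici 0) 0 :=
    (hf.comp_hasDerivAt_of_eq 0 (hasDerivAt_add_smul x v 0) (by simp)).hasDerivWithinAt
  have hlin : HasDerivWithinAt (fun s : ℝ => f (x + s • v)) c (Ici 0) 0 := by
    have h : HasDerivWithinAt (fun s : ℝ => f x + c * s) c (Ici 0) 0 := by
      simpa using (((hasDerivAt_id' (0 : ℝ)).const_mul c).const_add (f x)).hasDerivWithinAt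
    refine h.congr_of_eventuallyEq ?_ (by simp)
    filter_upwards [Ico_mem_nhdsGE ht] with s hs
    simpa using hline s hs
  exact (uniqueDiffWithinAt_Ici 0).eq_deriv _ hcomp hlin

end Geometry

theorem sum_sq_apply_single_eq_norm_sq {ι : Type*} [Fintype ι] [DecidableEq ι]
    (D : EuclideanSpace ℝ ι →L[ℝ] ℝ) :
    ∑ i, D (EuclideanSpace.single i 1) ^ 2 = ‖D‖ ^ 2 := by
  set g := (InnerProductSpace.toDual ℝ (EuclideanSpace ℝ ι)).symm D
  have hD : ∀ i, D (EuclideanSpace.single i 1) = g i := fun i => by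
    rw [← InnerProductSpace.toDual_symm_apply, EuclideanSpace.inner_single_right]
    simp [g]
  rw [← (InnerProductSpace.toDual ℝ _).symm.norm_map D, EuclideanSpace.real_norm_sq_eq]
  simp only [hD, g]

section SignedDistance

variable {N : ℕ} {S : Set (EuclideanSpace ℝ (Fin N))}

theorem continuous_sgnDist : Continuous (sgnDist S) :=
  (continuous_infDist_pt S).sub (continuous_infDist_pt _)

theorem sgnDist_eq_infDist_of_notMem {x : EuclideanSpace ℝ (Fin N)} (hx : x ∉ S) :
    sgnDist S x = infDist x S := by
  rw [sgnDist, infDist_zero_of_mem (subset_closure hx), sub_zero]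

theorem infDist_eq_sgnDist_of_nonneg {x : EuclideanSpace ℝ (Fin N)} (hx : 0 ≤ sgnDist S x) :
    infDist x S = sgnDist S x := by
  by_cases hxS : x ∈ S
  · have : sgnDist S x ≤ 0 := by simp [sgnDist, infDist_zero_of_mem hxS, infDist_nonneg]
    rw [infDist_zero_of_mem hxS]
    linarith
  · exact (sgnDist_eq_infDist_of_notMem hxS).symm

theorem isCompact_sgnDist_Icc (hS : IsCompact S) (hSne : S.Nonempty) (r : ℝ) :
    IsCompact {y | 0 ≤ sgnDist S y ∧ sgnDist S y ≤ r} := by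
  refine (hS.cthickening (r := r)).of_isClosed_subset ?_ ?_
  · exact (isClosed_le continuous_const continuous_sgnDist).inter
      (isClosed_le continuous_sgnDist continuous_const)
  · rintro y ⟨h0, hr⟩
    obtain ⟨z, hzS, hz⟩ := hS.exists_infDist_eq_dist hSne y
    refine mem_cthickening_of_dist_le y z r S hzS ?_
    rwa [← hz, infDist_eq_sgnDist_of_nonneg h0]

theorem exists_sgnDist_add_smul_eq (hS : IsCompact S) (hSne : S.Nonempty)
    {x : EuclideanSpace ℝ (Fin N)} (hx : 0 < sgnDist S x) :
    ∃ v, ‖v‖ = 1 ∧ ∀ s ∈ Ico 0 (sgnDist S x), sgnDist S (x + s • v) = sgnDist S x - s := by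
  set t := sgnDist S x
  obtain ⟨z, hzS, hz⟩ := hS.exists_infDist_eq_dist hSne x
  have hxt : infDist x S = t := infDist_eq_sgnDist_of_nonneg hx.le
  have hzx : ‖z - x‖ = t := by rw [← dist_eq_norm', ← hz, hxt]
  have hv : ‖t⁻¹ • (z - x)‖ = 1 := by
    rw [norm_smul, hzx, norm_inv, Real.norm_of_nonneg hx.le, inv_mul_cancel₀ hx.ne']
  refine ⟨t⁻¹ • (z - x), hv, fun s hs => ?_⟩
  have hz' : x + t • t⁻¹ • (z - x) ∈ S := by rwa [smul_inv_smul₀ hx.ne', add_sub_cancel]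
  have hinf := infDist_add_smul_eq hv hxt hz' (Ico_subset_Icc_self hs)
  have hnotMem : x + s • t⁻¹ • (z - x) ∉ S := fun hmem => by
    rw [infDist_zero_of_mem hmem] at hinf
    linarith [hs.2]
  rw [sgnDist_eq_infDist_of_notMem hnotMem, hinf]

theorem one_le_sum_sq_fderiv_sgnDist (hS : IsCompact S) (hSne : S.Nonempty)
    {x : EuclideanSpace ℝ (Fin N)} (hx : 0 < sgnDist S x)
    (hd : DifferentiableAt ℝ (sgnDist S) x) :
    1 ≤ ∑ i, fderiv ℝ (sgnDist S) x (EuclideanSpace.single i 1) ^ 2 := by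
  obtain ⟨v, hv, hline⟩ := exists_sgnDist_add_smul_eq hS hSne hx
  have hDv : fderiv ℝ (sgnDist S) x v = -1 :=
    hd.hasFDerivAt.apply_eq_of_add_smul hx fun s hs => by rw [hline s hs]; ring
  have hnorm : 1 ≤ ‖fderiv ℝ (sgnDist S) x‖ := by
    simpa [hDv, hv] using (fderiv ℝ (sgnDist S) x).le_opNorm v
  rw [sum_sq_apply_single_eq_norm_sq]
  exact one_le_pow₀ hnorm

end SignedDistance

theorem HasGradientWithinAt.le_inner_of_le {F : Type*} [NormedAddCommGroup F]
    [InnerProductSpace ℝ F] [CompleteSpace F] {A : Set F} {u w : F → ℝ} {p x v : F}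
    {w' : F →L[ℝ] ℝ} (hu : HasGradientWithinAt u p A x) (hw : HasFDerivAt w w' x)
    (hwu : ∀ y ∈ A, w y ≤ u y) (hx : w x = u x) (hv : ∃ᶠ s : ℝ in 𝓝[>] 0, x + s • v ∈ A) :
    w' v ≤ inner ℝ p v := by
  have hmin : IsLocalMinOn (fun y => u y - w y) A x :=
    eventually_of_mem self_mem_nhdsWithin fun y hy => by linarith [hwu y hy]
  have h := hmin.hasFDerivWithinAt_nonneg (hu.hasFDerivWithinAt.sub hw.hasFDerivWithinAt)
    (mem_posTangentConeAt_of_frequently_mem hv)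
  simp only [_root_.sub_apply, InnerProductSpace.toDual_apply_apply] at h
  linarith

section Comparison

variable {N : ℕ} {S : Set (EuclideanSpace ℝ (Fin N))}

theorem expBarrier_sgnDist_le (hS : IsCompact S) (hSne : S.Nonempty) {γ K m : ℝ}
    (hC2 : ContDiffOn ℝ 2 (sgnDist S) {y | 0 < sgnDist S y ∧ sgnDist S y < γ})
    (hK : 0 < K) (hlapl : ∀ y, 0 < sgnDist S y → sgnDist S y < γ → lapl (sgnDist S) y < K)
    (hγ : 0 < γ) (hm : 0 < m) {u : EuclideanSpace ℝ (Fin N) → ℝ}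
    (hu : ContinuousOn u {y | 0 ≤ sgnDist S y ∧ sgnDist S y ≤ γ})
    (huΩ : IsHarmonicOn u {y | 0 < sgnDist S y ∧ sgnDist S y < γ})
    (hu0 : ∀ y, sgnDist S y = 0 → m ≤ u y) (huγ : ∀ y, sgnDist S y = γ → u y = 0) :
    ∀ y, 0 ≤ sgnDist S y → sgnDist S y ≤ γ → expBarrier K γ m (sgnDist S y) ≤ u y := by
  have hΩ : IsOpen {y | 0 < sgnDist S y ∧ sgnDist S y < γ} :=
    isOpen_Ioo.preimage continuous_sgnDist
  intro y hy0 hyγ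
  refine le_of_isHarmonicOn_of_lapl_pos (w := fun y => expBarrier K γ m (sgnDist S y))
    (isCompact_sgnDist_Icc hS hSne γ) hΩ (fun y hy => ⟨hy.1.le, hy.2.le⟩) hu
    (contDiff_expBarrier.continuous.comp continuous_sgnDist).continuousOn huΩ
    (contDiff_expBarrier.comp_contDiffOn hC2) (fun y hy => ?_) (fun y hy => ?_) y ⟨hy0, hyγ⟩
  · have hd := hC2.contDiffAt (hΩ.mem_nhds hy)
    exact lapl_expBarrier_comp_pos hK hγ hm hd
      (one_le_sum_sq_fderiv_sgnDist hS hSne hy.1 (hd.differentiableAt two_ne_zero))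
      (hlapl y hy.1 hy.2)
  · obtain ⟨⟨h0, hγ'⟩, hyΩ⟩ := hy
    rcases h0.eq_or_lt with h0 | h0
    · rw [← h0, expBarrier_zero (mul_pos hK hγ)]
      exact hu0 y h0.symm
    · have hyγ : sgnDist S y = γ := hγ'.eq_of_not_lt fun h => hyΩ ⟨h0, h⟩
      rw [hyγ, expBarrier_self, huγ y hyγ]

theorem neg_deriv_expBarrier_le_norm (hS : IsCompact S) (hSne : S.Nonempty) {γ K m : ℝ}
    (hγ : 0 < γ) {x : EuclideanSpace ℝ (Fin N)} (hx : sgnDist S x = γ)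
    (hdx : DifferentiableAt ℝ (sgnDist S) x) {u : EuclideanSpace ℝ (Fin N) → ℝ}
    {p : EuclideanSpace ℝ (Fin N)}
    (hp : HasGradientWithinAt u p {y | 0 ≤ sgnDist S y ∧ sgnDist S y ≤ γ} x) (hux : u x = 0)
    (hwu : ∀ y, 0 ≤ sgnDist S y → sgnDist S y ≤ γ → expBarrier K γ m (sgnDist S y) ≤ u y) :
    K * m * Real.exp (-(K * γ)) / (1 - Real.exp (-(K * γ))) ≤ ‖p‖ := by
  obtain ⟨v, hv, hline⟩ := exists_sgnDist_add_smul_eq hS hSne (hx ▸ hγ)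
  rw [hx] at hline
  have hdv : fderiv ℝ (sgnDist S) x v = -1 :=
    hdx.hasFDerivAt.apply_eq_of_add_smul hγ fun s hs => by rw [hline s hs, hx]; ring
  have hinward : ∃ᶠ s : ℝ in 𝓝[>] 0, x + s • v ∈ {y | 0 ≤ sgnDist S y ∧ sgnDist S y ≤ γ} := by
    refine Eventually.frequently ?_
    filter_upwards [Ioo_mem_nhdsGT hγ] with s hs
    rw [hline s ⟨hs.1.le, hs.2⟩]
    constructor <;> linarith [hs.1, hs.2]
  have hflux := hp.le_inner_of_le
    ((hasDerivAt_expBarrier (sgnDist S x)).comp_hasFDerivAt x hdx.hasFDerivAt)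
    (fun y hy => hwu y hy.1 hy.2) (by simp [hx, expBarrier_self, hux]) hinward
  calc K * m * Real.exp (-(K * γ)) / (1 - Real.exp (-(K * γ))) ≤ inner ℝ p v := by
        simpa [hx, hdv] using hflux
    _ ≤ ‖p‖ := by simpa [hv] using real_inner_le_norm p v

end Comparison

theorem stmt2_general (N : ℕ) (S : Set (EuclideanSpace ℝ (Fin N)))
    (hSne : S.Nonempty) (hScp : IsCompact S)
    (γ₀ : ℝ) (hγ₀ : 0 < γ₀)
    (hC2 : ContDiffOn ℝ 2 (sgnDist S) {x | |sgnDist S x| < 2 * γ₀})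
    (m : ℝ) (hm : 0 < m) :
    ∃ α > 0, ∀ γ, 0 < γ → γ < γ₀ →
      ∀ u : EuclideanSpace ℝ (Fin N) → ℝ,
        ContinuousOn u {x | 0 ≤ sgnDist S x ∧ sgnDist S x ≤ γ} →
        IsHarmonicOn u {x | 0 < sgnDist S x ∧ sgnDist S x < γ} →
        (∀ x, 0 ≤ sgnDist S x → sgnDist S x ≤ γ → 0 ≤ u x) →
        (∀ x, sgnDist S x = 0 → m ≤ u x) →
        (∀ x, sgnDist S x = γ → u x = 0) →
        ∀ x, sgnDist S x = γ →
          ∀ p : EuclideanSpace ℝ (Fin N),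
            HasGradientWithinAt u p {x | 0 ≤ sgnDist S x ∧ sgnDist S x ≤ γ} x →
            α / γ ^ 2 ≤ ‖p‖ ^ 2 := by
  have hU : IsOpen {x | |sgnDist S x| < 2 * γ₀} :=
    isOpen_lt (continuous_abs.comp continuous_sgnDist) continuous_const
  have hmemU : ∀ y, 0 ≤ sgnDist S y → sgnDist S y ≤ γ₀ → |sgnDist S y| < 2 * γ₀ :=
    fun y h0 h1 => by rw [abs_of_nonneg h0]; linarith
  obtain ⟨K, hK, hlapl⟩ := (isCompact_sgnDist_Icc hScp hSne γ₀).exists_lapl_lt hU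
    (fun y hy => hmemU y hy.1 hy.2) hC2
  refine ⟨(m * Real.exp (-(K * γ₀))) ^ 2, by positivity, ?_⟩
  intro γ hγ hγγ₀ u hu huΩ _ hu0 huγ x hx p hp
  have hwu := expBarrier_sgnDist_le hScp hSne
    (hC2.mono fun y hy => hmemU y hy.1.le (by linarith [hy.2])) hK
    (fun y h0 h1 => hlapl y ⟨h0.le, by linarith⟩) hγ hm hu huΩ hu0 huγ
  have hdx : DifferentiableAt ℝ (sgnDist S) x :=
    (hC2.contDiffAt (hU.mem_nhds (hmemU x (hx ▸ hγ.le) (hx ▸ hγγ₀.le)))).differentiableAt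
      two_ne_zero
  have hp : m * Real.exp (-(K * γ₀)) / γ ≤ ‖p‖ :=
    (div_le_neg_deriv_expBarrier hK hγ hγγ₀.le hm.le).trans
      (neg_deriv_expBarrier_le_norm hScp hSne hγ hx hdx hp (huγ x hx) hwu)
  rw [← div_pow]
  exact pow_le_pow_left₀ (by positivity) hp 2

theorem stmt2 (N : ℕ) (hN : 2 ≤ N) (S : Set (EuclideanSpace ℝ (Fin N)))
    (hSne : S.Nonempty) (hScp : IsCompact S) (hSreg : S = closure (interior S))
    (γ₀ : ℝ) (hγ₀ : 0 < γ₀)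
    (hC2 : ContDiffOn ℝ 2 (sgnDist S) {x | |sgnDist S x| < 2 * γ₀})
    (m : ℝ) (hm : 0 < m) :
    ∃ α > 0, ∀ γ, 0 < γ → γ < γ₀ →
      ∀ u : EuclideanSpace ℝ (Fin N) → ℝ,
        ContinuousOn u {x | 0 ≤ sgnDist S x ∧ sgnDist S x ≤ γ} →
        IsHarmonicOn u {x | 0 < sgnDist S x ∧ sgnDist S x < γ} →
        (∀ x, 0 ≤ sgnDist S x → sgnDist S x ≤ γ → 0 ≤ u x) →
        (∀ x, sgnDist S x = 0 → m ≤ u x) →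
        (∀ x, sgnDist S x = γ → u x = 0) →
        ∀ x, sgnDist S x = γ →
          ∀ p : EuclideanSpace ℝ (Fin N),
            HasGradientWithinAt u p {x | 0 ≤ sgnDist S x ∧ sgnDist S x ≤ γ} x →
            α / γ ^ 2 ≤ ‖p‖ ^ 2 :=
  stmt2_general N S hSne hScp γ₀ hγ₀ hC2 m hm
end

section
/- Let N ≥ 1 and σ > 0. Let C₁ ⊆ ℝ × ℝ^N be nonempty and compact, let L ⊆ ℝ × ℝ^N be nonempty and closed, set ē := e(C₁, L), and assume ē > 0. Let p̄₁ ∈ C₁ and p̄₂ ∈ L satisfy ‖p̄₁ − p̄₂‖_σ = ē. Fix δ ∈ (0, ē] and define f(p, q) := d^σ_{C₁}(p) + d^σ_L(q) + ‖p − q‖²_σ / (2δ) for p, q ∈ ℝ × ℝ^N. Then f(p, q) ≥ ē − δ/2 for all p, q ∈ ℝ × ℝ^N, and equality holds at q̄₁ := ½(1 + δ/ē) p̄₁ + ½(1 − δ/ē) p̄₂ and q̄₂ := ½(1 − δ/ē) p̄₁ + ½(1 + δ/ē) p̄₂. In particular f attains its global minimum, equal to ē − δ/2, at the pair (q̄₁,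 q̄₂). -/
/-! By the triangle inequality, `d_{C₁}(p) + d_L(q) ≥ ē - ‖p - q‖_σ`, and `s - s²/(2δ) ≤ δ/2` for
every real `s`, with equality at `s = δ`; together they give the lower bound. Since `p̄₁, p̄₂`
realise `ē`, a point of the segment `[p̄₁, p̄₂]` at distance `r` from `p̄₁` is at distance exactly
`r` from `C₁` (and symmetrically for `L`). The points `q̄₁, q̄₂` lie on that segment at distance
`(ē - δ)/2` from `p̄₁` resp. `p̄₂` and at distance `δ` from each other, so both inequalities are
equalities there. -/

open Metric Set

/-- The norm `‖(t,x)‖_σ = sqrt(t²/σ² + ‖x‖²)` on `ℝ × ℝ^N`. -/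
noncomputable def snormS {N : ℕ} (σ : ℝ) (p : ℝ × EuclideanSpace ℝ (Fin N)) : ℝ :=
  Real.sqrt (p.1 ^ 2 / σ ^ 2 + ‖p.2‖ ^ 2)

/-- The distance function `d^σ_E(p) = inf {‖q - p‖_σ : q ∈ E}`. -/
noncomputable def distS {N : ℕ} (σ : ℝ) (E : Set (ℝ × EuclideanSpace ℝ (Fin N)))
    (p : ℝ × EuclideanSpace ℝ (Fin N)) : ℝ :=
  sInf {r | ∃ q ∈ E, r = snormS σ (q - p)}

/-- The minimal distance `e(A,B) = inf {‖p - q‖_σ : p ∈ A, q ∈ B}`. -/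
noncomputable def eS {N : ℕ} (σ : ℝ) (A B : Set (ℝ × EuclideanSpace ℝ (Fin N))) : ℝ :=
  sInf {r | ∃ p ∈ A, ∃ q ∈ B, r = snormS σ (p - q)}

section Seminorm

variable {N : ℕ} {σ : ℝ}

noncomputable def snormSeminorm (σ : ℝ) : Seminorm ℝ (ℝ × EuclideanSpace ℝ (Fin N)) :=
  (normSeminorm ℝ (WithLp 2 (ℝ × EuclideanSpace ℝ (Fin N)))).comp
    ((WithLp.linearEquiv 2 ℝ _).symm.toLinearMap ∘ₗ (σ⁻¹ • LinearMap.id).prodMap LinearMap.id)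

theorem snormSeminorm_apply (p : ℝ × EuclideanSpace ℝ (Fin N)) :
    snormSeminorm σ p = snormS σ p := by
  simp [snormSeminorm, snormS, WithLp.prod_norm_eq_of_L2, mul_pow, sq_abs, div_eq_inv_mul]

theorem snormS_nonneg (p : ℝ × EuclideanSpace ℝ (Fin N)) : 0 ≤ snormS σ p :=
  Real.sqrt_nonneg _

theorem snormS_add_le (p q : ℝ × EuclideanSpace ℝ (Fin N)) :
    snormS σ (p + q) ≤ snormS σ p + snormS σ q := by
  simpa only [snormSeminorm_apply] using map_add_le_add (snormSeminorm σ) p q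

theorem snormS_smul (c : ℝ) (p : ℝ × EuclideanSpace ℝ (Fin N)) :
    snormS σ (c • p) = |c| * snormS σ p := by
  simpa only [snormSeminorm_apply, Real.norm_eq_abs] using map_smul_eq_mul (snormSeminorm σ) c p

theorem snormS_sub_comm (p q : ℝ × EuclideanSpace ℝ (Fin N)) :
    snormS σ (p - q) = snormS σ (q - p) := by
  simpa only [snormSeminorm_apply] using map_sub_rev (snormSeminorm σ) p q

end Seminorm

theorem sub_sq_div_two_mul_le_half {δ : ℝ} (hδ : 0 < δ) (s : ℝ) :
    s - s ^ 2 / (2 * δ) ≤ δ / 2 := by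
  have : s - s ^ 2 / (2 * δ) = δ / 2 - (s - δ) ^ 2 / (2 * δ) := by field_simp; ring
  rw [this, sub_le_self_iff]
  positivity

section Distance

variable {N : ℕ} {σ : ℝ} {A B : Set (ℝ × EuclideanSpace ℝ (Fin N))}
  {a b : ℝ × EuclideanSpace ℝ (Fin N)}

theorem distS_le (ha : a ∈ A) (p : ℝ × EuclideanSpace ℝ (Fin N)) :
    distS σ A p ≤ snormS σ (a - p) :=
  csInf_le ⟨0, by rintro r ⟨q, -, rfl⟩; exact snormS_nonneg _⟩ ⟨a, ha, rfl⟩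

theorem le_distS (hA : A.Nonempty) {p : ℝ × EuclideanSpace ℝ (Fin N)} {c : ℝ}
    (h : ∀ a ∈ A, c ≤ snormS σ (a - p)) : c ≤ distS σ A p := by
  obtain ⟨a₀, ha₀⟩ := hA
  refine le_csInf ⟨_, a₀, ha₀, rfl⟩ ?_
  rintro r ⟨a, ha, rfl⟩
  exact h a ha

theorem eS_le (ha : a ∈ A) (hb : b ∈ B) : eS σ A B ≤ snormS σ (a - b) :=
  csInf_le ⟨0, by rintro r ⟨x, -, y, -, rfl⟩; exact snormS_nonneg _⟩ ⟨a, ha, b, hb, rfl⟩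

theorem eS_le_distS_add_distS_add (hA : A.Nonempty) (hB : B.Nonempty)
    (p q : ℝ × EuclideanSpace ℝ (Fin N)) :
    eS σ A B ≤ distS σ A p + distS σ B q + snormS σ (p - q) := by
  suffices eS σ A B - distS σ B q - snormS σ (p - q) ≤ distS σ A p by linarith
  refine le_distS hA fun a ha => ?_
  suffices eS σ A B - snormS σ (a - p) - snormS σ (p - q) ≤ distS σ B q by linarith
  refine le_distS hB fun b hb => ?_
  have hab : snormS σ (a - b) ≤ snormS σ (a - p) + snormS σ (p - q) + snormS σ (b - q) := by
    calc snormS σ (a - b) = snormS σ ((a - p) + (p - q) + (q - b)) := by congr 1; abel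
      _ ≤ snormS σ (a - p) + snormS σ (p - q) + snormS σ (q - b) :=
        (snormS_add_le _ _).trans (add_le_add_left (snormS_add_le _ _) _)
      _ = _ := by rw [snormS_sub_comm q]
  linarith [eS_le (σ := σ) ha hb]

theorem eS_comm : eS σ A B = eS σ B A := by
  unfold eS
  congr 1
  ext r
  constructor <;> rintro ⟨x, hx, y, hy, rfl⟩ <;> exact ⟨y, hy, x, hx, snormS_sub_comm _ _⟩

theorem distS_add_smul_sub_eq (ha : a ∈ A) (hb : b ∈ B) (hab : snormS σ (a - b) = eS σ A B)
    {t : ℝ} (ht₀ : 0 ≤ t) (ht₁ : t ≤ 1) :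
    distS σ A (a + t • (b - a)) = t * eS σ A B := by
  set q := a + t • (b - a)
  have hqa : snormS σ (a - q) = t * eS σ A B := by
    rw [show a - q = t • (a - b) by module, snormS_smul, abs_of_nonneg ht₀, hab]
  have hqb : snormS σ (q - b) = (1 - t) * eS σ A B := by
    rw [show q - b = (1 - t) • (a - b) by module, snormS_smul, abs_of_nonneg (sub_nonneg.2 ht₁),
      hab]
  refine le_antisymm (hqa ▸ distS_le ha q) (le_distS ⟨a, ha⟩ fun a' ha' => ?_)
  have htri : snormS σ (a' - b) ≤ snormS σ (a' - q) + snormS σ (q - b) := by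
    simpa using snormS_add_le (a' - q) (q - b)
  linarith [eS_le (σ := σ) ha' hb]

end Distance

theorem stmt6_general (N : ℕ) (σ : ℝ)
    (C₁ L : Set (ℝ × EuclideanSpace ℝ (Fin N)))
    (ebar : ℝ) (hebar : ebar = eS σ C₁ L) (hepos : 0 < ebar)
    (p₁ p₂ : ℝ × EuclideanSpace ℝ (Fin N)) (hp₁ : p₁ ∈ C₁) (hp₂ : p₂ ∈ L)
    (hdist : snormS σ (p₁ - p₂) = ebar)
    (δ : ℝ) (hδ : 0 < δ) (hδe : δ ≤ ebar)
    (f : (ℝ × EuclideanSpace ℝ (Fin N)) → (ℝ × EuclideanSpace ℝ (Fin N)) → ℝ)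
    (hf : f = fun p q => distS σ C₁ p + distS σ L q + snormS σ (p - q) ^ 2 / (2 * δ)) :
    (∀ p q, ebar - δ / 2 ≤ f p q) ∧
    f (((1 + δ / ebar) / 2) • p₁ + ((1 - δ / ebar) / 2) • p₂)
      (((1 - δ / ebar) / 2) • p₁ + ((1 + δ / ebar) / 2) • p₂) = ebar - δ / 2 := by
  subst hf
  dsimp only
  refine ⟨fun p q => ?_, ?_⟩
  · linarith [hebar ▸ eS_le_distS_add_distS_add (σ := σ) ⟨p₁, hp₁⟩ ⟨p₂, hp₂⟩ p q,
      sub_sq_div_two_mul_le_half hδ (snormS σ (p - q))]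
  set t := (1 - δ / ebar) / 2 with ht
  have hδe' : 0 < δ / ebar := div_pos hδ hepos
  have ht₀ : 0 ≤ t := by linarith [(div_le_one hepos).2 hδe]
  have ht₁ : t ≤ 1 := by linarith
  have hC₁ : distS σ C₁ (p₁ + t • (p₂ - p₁)) = t * ebar :=
    hebar ▸ distS_add_smul_sub_eq hp₁ hp₂ (hdist.trans hebar) ht₀ ht₁
  have hL : distS σ L (p₂ + t • (p₁ - p₂)) = t * ebar := by
    rw [hebar, eS_comm]
    exact distS_add_smul_sub_eq hp₂ hp₁ (by rw [snormS_sub_comm, hdist, hebar, eS_comm]) ht₀ ht₁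
  have hgap : snormS σ (p₁ + t • (p₂ - p₁) - (p₂ + t • (p₁ - p₂))) = δ := by
    rw [show p₁ + t • (p₂ - p₁) - (p₂ + t • (p₁ - p₂)) = (δ / ebar) • (p₁ - p₂) by
        rw [ht]; module, snormS_smul, abs_of_pos hδe', hdist, div_mul_cancel₀ _ hepos.ne']
  rw [show ((1 + δ / ebar) / 2) • p₁ + t • p₂ = p₁ + t • (p₂ - p₁) by rw [ht]; module,
    show t • p₁ + ((1 + δ / ebar) / 2) • p₂ = p₂ + t • (p₁ - p₂) by rw [ht]; module,
    hC₁, hL, hgap, ht]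
  field_simp
  ring

theorem stmt6 (N : ℕ) (hN : 1 ≤ N) (σ : ℝ) (hσ : 0 < σ)
    (C₁ L : Set (ℝ × EuclideanSpace ℝ (Fin N)))
    (hC₁ne : C₁.Nonempty) (hC₁cp : IsCompact C₁) (hLne : L.Nonempty) (hLcl : IsClosed L)
    (ebar : ℝ) (hebar : ebar = eS σ C₁ L) (hepos : 0 < ebar)
    (p₁ p₂ : ℝ × EuclideanSpace ℝ (Fin N)) (hp₁ : p₁ ∈ C₁) (hp₂ : p₂ ∈ L)
    (hdist : snormS σ (p₁ - p₂) = ebar)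
    (δ : ℝ) (hδ : 0 < δ) (hδe : δ ≤ ebar)
    (f : (ℝ × EuclideanSpace ℝ (Fin N)) → (ℝ × EuclideanSpace ℝ (Fin N)) → ℝ)
    (hf : f = fun p q => distS σ C₁ p + distS σ L q + snormS σ (p - q) ^ 2 / (2 * δ)) :
    (∀ p q, ebar - δ / 2 ≤ f p q) ∧
    f (((1 + δ / ebar) / 2) • p₁ + ((1 - δ / ebar) / 2) • p₂)
      (((1 - δ / ebar) / 2) • p₁ + ((1 + δ / ebar) / 2) • p₂) = ebar - δ / 2 :=
  stmt6_general N σ C₁ L ebar hebar hepos p₁ p₂ hp₁ hp₂ hdist δ hδ hδe f hf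
end
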